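/- Let ℓ be a natural number with ⌊r/2⌋ < ℓ and 2ℓ < r + 2s, and let c = ⌈r/2⌉. Then the number of pairs (i,j) ∈ A with i < ℓ, ℓ < j, and i + j = ℓ + c equals r + s − ℓ − ⌊r/2⌋. -/

import Mathlib

/-!
Write `r = 2m + ε` with `m = ⌊r/2⌋`, so that `c = m + ε`. On the antidiagonal `i + j = ℓ + c`
the sum lies in `[r + 1, r + s]`, which misses both triangles and lies inside the sum range of
the chevron; so a pair `(i, ℓ + c - i)` with `i < ℓ < j` is in `A` exactly when it avoids the
arms of the chevron. The arm `2j ≥ r + 2s + 2` cuts off `i < ℓ - s`, the other arm is never met,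
and `ℓ < j` means `i < c`. The pairs are therefore indexed by `i ∈ [ℓ - s, c - 1]`, and
`c + s - ℓ = r + s - ℓ - m`.
-/

/-- The set `A` of the paper. -/
def admissiblePairs (r s ε : ℤ) : Set (ℤ × ℤ) :=
  {p : ℤ × ℤ | 0 ≤ p.1 ∧ p.1 ≤ p.2 ∧ p.2 ≤ r ∧
    ¬(p.1 + 2 ≤ p.2 ∧ p.1 + p.2 < r - 2 * s + ε) ∧
    ¬(p.1 + 2 ≤ p.2 ∧ r + 2 * s < p.1 + p.2) ∧
    ¬((r - s + ε ≤ p.1 + p.2 ∧ p.1 + p.2 ≤ r + s) ∧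
        (2 * p.1 ≤ r - 2 * s - 2 + ε ∨ r + 2 * s + 2 ≤ 2 * p.2))}

theorem admissiblePairs_antidiagonal_eq_image {r s ε m ℓ : ℤ} (hr : r = 2 * m + ε)
    (hε : ε = 0 ∨ ε = 1) (hrs : 2 * s ≤ r) (hmℓ : m < ℓ) (hℓ : 2 * ℓ < r + 2 * s) :
    {p ∈ admissiblePairs r s ε | p.1 < ℓ ∧ ℓ < p.2 ∧ p.1 + p.2 = ℓ + (m + ε)} =
      (fun i : ℤ => (i, ℓ + (m + ε) - i)) '' Set.Icc (ℓ - s) (m + ε - 1) := by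
  ext ⟨i, j⟩
  simp only [admissiblePairs, Set.mem_ofPred_eq, Set.mem_image, Set.mem_Icc, Prod.mk.injEq]
  constructor
  · rintro ⟨⟨-, -, -, -, -, hchevron⟩, -, hℓj, hsum⟩
    exact ⟨i, ⟨by omega, by omega⟩, rfl, by omega⟩
  · rintro ⟨i, ⟨hi₁, hi₂⟩, rfl, rfl⟩
    omega

theorem ncard_image_Icc_antidiagonal (n a b : ℤ) (h : a ≤ b + 1) :
    (((fun i : ℤ => (i, n - i)) '' Set.Icc a b).ncard : ℤ) = b + 1 - a := by
  rw [Set.ncard_image_of_injective _ fun x y hxy => congrArg Prod.fst hxy,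
    ← Finset.coe_Icc, Set.ncard_coe_finset, Int.card_Icc_of_le _ _ h]

theorem Nat.ite_odd_eq_mod_two (r : ℕ) : (if Odd r then 1 else 0 : ℤ) = ((r % 2 : ℕ) : ℤ) := by
  split_ifs with h
  · rw [Nat.odd_iff.mp h]; rfl
  · rw [Nat.even_iff.mp (Nat.not_odd_iff_even.mp h)]; rfl

theorem stmt11_general (r s : ℕ) (hrs : 2 * s ≤ r)
    (ε : ℤ) (hε : ε = if Odd r then 1 else 0)
    (A : Set (ℤ × ℤ))
    (hA : A = {p : ℤ × ℤ | 0 ≤ p.1 ∧ p.1 ≤ p.2 ∧ p.2 ≤ (r : ℤ) ∧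
        ¬(p.1 + 2 ≤ p.2 ∧ p.1 + p.2 < (r : ℤ) - 2 * s + ε) ∧
        ¬(p.1 + 2 ≤ p.2 ∧ (r : ℤ) + 2 * s < p.1 + p.2) ∧
        ¬(((r : ℤ) - s + ε ≤ p.1 + p.2 ∧ p.1 + p.2 ≤ (r : ℤ) + s) ∧
            (2 * p.1 ≤ (r : ℤ) - 2 * s - 2 + ε ∨ (r : ℤ) + 2 * s + 2 ≤ 2 * p.2))})
    (c : ℕ) (hc : c = (r + 1) / 2)
    (ℓ : ℕ) (hℓ1 : r / 2 < ℓ) (hℓ2 : 2 * ℓ < r + 2 * s) :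
    (({p ∈ A | p.1 < (ℓ : ℤ) ∧ (ℓ : ℤ) < p.2 ∧ p.1 + p.2 = (ℓ : ℤ) + c}).ncard : ℤ)
      = (r : ℤ) + s - ℓ - ((r / 2 : ℕ) : ℤ) := by
  rw [Nat.ite_odd_eq_mod_two] at hε
  have hr : (r : ℤ) = 2 * ((r / 2 : ℕ) : ℤ) + ε := by omega
  have hc' : (c : ℤ) = ((r / 2 : ℕ) : ℤ) + ε := by omega
  change A = admissiblePairs r s ε at hA
  rw [hA, hc', admissiblePairs_antidiagonal_eq_image hr (by omega) (by omega) (by omega) (by omega),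
    ncard_image_Icc_antidiagonal _ _ _ (by omega)]
  omega

/-- Counting claim in Case 2 of the inductive step (Theorem 1.1, `C(r+2,2) > 2d−g+1`):
with `c = ⌈r/2⌉`, `⌊r/2⌋ < ℓ` and `2ℓ < r + 2s`, the number of pairs `(i,j) ∈ A` with
`i < ℓ < j` and `i + j = ℓ + c` equals `r + s − ℓ − ⌊r/2⌋`. -/
theorem stmt11 (r s : ℕ) (hs : 1 ≤ s) (hrs : 2 * s ≤ r)
    (ε : ℤ) (hε : ε = if Odd r then 1 else 0)
    (A : Set (ℤ × ℤ))
    (hA : A = {p : ℤ × ℤ | 0 ≤ p.1 ∧ p.1 ≤ p.2 ∧ p.2 ≤ (r : ℤ) ∧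
        ¬(p.1 + 2 ≤ p.2 ∧ p.1 + p.2 < (r : ℤ) - 2 * s + ε) ∧
        ¬(p.1 + 2 ≤ p.2 ∧ (r : ℤ) + 2 * s < p.1 + p.2) ∧
        ¬(((r : ℤ) - s + ε ≤ p.1 + p.2 ∧ p.1 + p.2 ≤ (r : ℤ) + s) ∧
            (2 * p.1 ≤ (r : ℤ) - 2 * s - 2 + ε ∨ (r : ℤ) + 2 * s + 2 ≤ 2 * p.2))})
    (c : ℕ) (hc : c = (r + 1) / 2)
    (ℓ : ℕ) (hℓ1 : r / 2 < ℓ) (hℓ2 : 2 * ℓ < r + 2 * s) :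
    (({p ∈ A | p.1 < (ℓ : ℤ) ∧ (ℓ : ℤ) < p.2 ∧ p.1 + p.2 = (ℓ : ℤ) + c}).ncard : ℤ)
      = (r : ℤ) + s - ℓ - ((r / 2 : ℕ) : ℤ) :=
  stmt11_general r s hrs ε hε A hA c hc ℓ hℓ1 hℓ2
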